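/- arXiv:2602.04378 — 10 statements merged into one kernel-verified Lean document; each statement's English description precedes it below -/
import Mathlib

section
/- Under exact line search, the Frank-Wolfe polar dynamics for projecting onto the unit ball satisfy r_{t+1}² = r_t²(1 - θ_t²) / ((r_t+1)² + 2(r_t+1)θ_t + 1) and θ_{t+1} = -((r_t+1)/r_t)·r_{t+1}. -/
/-- Frank–Wolfe polar dynamics under exact line search:
`r₊² = r²(1-θ²)/((r+1)² + 2(r+1)θ + 1)` and `θ₊ = -((r+1)/r)·r₊`. -/
theorem fw_exact_line_search_polar_dynamics
    (r θ rnext θnext γ : ℝ)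
    (hr : 0 < r) (hθ1 : -1 ≤ θ) (hθr : θ ≤ -r / 2) (hrnext : 0 < rnext)
    (hden : (r + 1) ^ 2 + 2 * (r + 1) * θ + 1 > 0)
    (hγ : γ = r * (1 + r + θ) / ((r + 1) ^ 2 + 2 * (r + 1) * θ + 1))
    (hrec1 : rnext ^ 2 = ((1 - γ) * r - γ) ^ 2 - 2 * γ * ((1 - γ) * r - γ) * θ + γ ^ 2)
    (hrec2 : rnext * θnext = ((1 - γ) * r - γ) * θ - γ) :
    rnext ^ 2 = r ^ 2 * (1 - θ ^ 2) / ((r + 1) ^ 2 + 2 * (r + 1) * θ + 1) ∧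
      θnext = -((r + 1) / r) * rnext := by
  have hD : ((r + 1) ^ 2 + 2 * (r + 1) * θ + 1) ≠ 0 := ne_of_gt hden
  have h1 : rnext ^ 2 = r ^ 2 * (1 - θ ^ 2) / ((r + 1) ^ 2 + 2 * (r + 1) * θ + 1) := by
    rw [hrec1, hγ]; field_simp [show (r + 1) * (r + 1 + θ * 2) + 1 ≠ 0 by convert hD using 1; ring]; ring
  refine ⟨h1, ?_⟩
  have key : rnext * θnext = rnext * (-((r + 1) / r) * rnext) := by
    have : rnext * (-((r + 1) / r) * rnext) = -((r + 1) / r) * rnext ^ 2 := by ring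
    rw [hrec2, this, h1, hγ]
    field_simp [show (r + 1) * (r + 1 + θ * 2) + 1 ≠ 0 by convert hD using 1; ring]
    ring
  exact mul_left_cancel₀ (ne_of_gt hrnext) key
end

section
/- Upper bound on the residual contraction: if θ_{t+1} = -((r_t+1)/r_t)·r_{t+1} with |θ_{t+1}| ≤ 1 and r_t, r_{t+1} > 0, then r_{t+1} ≤ r_t/(1 + r_t). Consequently, by telescoping, r_t ≤ 1/(t + 1/r_0) for all t ≥ 0, and hence the primal gap satisfies r_t² ≤ 1/(t + 1/r_0)². -/
/-! The constraint `|θ_{t+1}| ≤ 1` says `(r_t + 1) r_{t+1} ≤ r_t`, i.e. `1/r_{t+1} ≥ 1/r_t + 1`.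
So the reciprocals `1/r_t` grow by at least one per step, giving `1/r_t ≥ t + 1/r_0`. -/

lemma le_div_one_add_of_abs_neg_mul_le_one {a b : ℝ} (ha : 0 < a)
    (h : |-((a + 1) / a) * b| ≤ 1) : b ≤ a / (1 + a) := by
  have hle : (a + 1) / a * b ≤ 1 := by
    rw [neg_mul, abs_neg] at h
    exact (le_abs_self _).trans h
  rw [div_mul_eq_mul_div, div_le_one ha] at hle
  rw [le_div_iff₀ (by positivity)]
  linarith

lemma one_div_add_one_le_one_div {a b : ℝ} (ha : 0 < a) (hb : 0 < b)
    (h : b ≤ a / (1 + a)) : 1 / a + 1 ≤ 1 / b :=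
  calc 1 / a + 1 = 1 / (a / (1 + a)) := by field_simp
    _ ≤ 1 / b := one_div_le_one_div_of_le hb h

lemma natCast_add_le_of_add_one_le_succ (s : ℕ → ℝ) (hs : ∀ n, s n + 1 ≤ s (n + 1)) (n : ℕ) :
    n + s 0 ≤ s n := by
  induction n with
  | zero => simp
  | succ n ih =>
    push_cast
    linarith [hs n]

/-- Residual contraction upper bound and its telescoped consequence
`r_t ≤ 1/(t + 1/r₀)`, hence `r_t² ≤ 1/(t + 1/r₀)²`. -/
theorem fw_residual_upper_bound
    (r θ : ℕ → ℝ)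
    (hrpos : ∀ t, 0 < r t)
    (hθ : ∀ t, θ (t + 1) = -((r t + 1) / r t) * r (t + 1))
    (hθbd : ∀ t, |θ (t + 1)| ≤ 1) :
    (∀ t, r (t + 1) ≤ r t / (1 + r t)) ∧
    (∀ t : ℕ, r t ≤ 1 / (t + 1 / r 0)) ∧
    (∀ t : ℕ, (r t) ^ 2 ≤ 1 / (t + 1 / r 0) ^ 2) := by
  have hstep : ∀ t, r (t + 1) ≤ r t / (1 + r t) := fun t =>
    le_div_one_add_of_abs_neg_mul_le_one (hrpos t) (hθ t ▸ hθbd t)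
  have hinv : ∀ t : ℕ, (t : ℝ) + 1 / r 0 ≤ 1 / r t :=
    natCast_add_le_of_add_one_le_succ (fun t => 1 / r t)
      (fun t => one_div_add_one_le_one_div (hrpos t) (hrpos (t + 1)) (hstep t))
  have hbound : ∀ t : ℕ, r t ≤ 1 / (t + 1 / r 0) := fun t => by
    simpa using one_div_le_one_div_of_le (by have := hrpos 0; positivity) (hinv t)
  refine ⟨hstep, hbound, fun t => ?_⟩
  rw [← one_div_pow]
  exact pow_le_pow_left₀ (hrpos t).le (hbound t) 2
end

section
/- Forward dynamics in residual-contraction coordinates: for Frank-Wolfe with exact line search on the unit-ball projection problem, the contraction factors s_t = r_{t+1}/r_t satisfy s_{t+1}² = (1 - (1+r_t)²s_t²) / (2 - 2s_t - (2+r_t)r_t s_t²). -/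
private lemma fw_key (a b c : ℝ) (ha : a ≠ 0) (hb : b ≠ 0)
    (hD : (b + 1) ^ 2 + 2 * (b + 1) * (-((a + 1) / a) * b) + 1 ≠ 0)
    (hc : c ^ 2 = b ^ 2 * (1 - (-((a + 1) / a) * b) ^ 2) /
      ((b + 1) ^ 2 + 2 * (b + 1) * (-((a + 1) / a) * b) + 1))
    (hden : 2 - 2 * (b / a) - (2 + a) * a * (b / a) ^ 2 ≠ 0) :
    (c / b) ^ 2 =
      (1 - (1 + a) ^ 2 * (b / a) ^ 2) /
        (2 - 2 * (b / a) - (2 + a) * a * (b / a) ^ 2) := by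
  have hDeq : 2 - 2 * (b / a) - (2 + a) * a * (b / a) ^ 2 =
      (b + 1) ^ 2 + 2 * (b + 1) * (-((a + 1) / a) * b) + 1 := by
    field_simp
    ring
  rw [div_pow, hc, hDeq, div_div,
    div_eq_div_iff (mul_ne_zero hD (pow_ne_zero 2 hb)) hD]
  field_simp
  ring

/-- Forward dynamics in residual–contraction coordinates:
`s₊² = (1 - (1+r)²s²)/(2 - 2s - (2+r)rs²)`. -/
theorem fw_forward_dynamics
    (r : ℕ → ℝ) (θ : ℕ → ℝ) (s : ℕ → ℝ) (t : ℕ)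
    (hr0 : 0 < r t) (hr1 : 0 < r (t + 1)) (hr2 : 0 < r (t + 2))
    (hθnext : θ (t + 1) = -((r t + 1) / r t) * r (t + 1))
    (hdenθ : (r (t + 1) + 1) ^ 2 + 2 * (r (t + 1) + 1) * θ (t + 1) + 1 ≠ 0)
    (hrec : r (t + 2) ^ 2 =
      r (t + 1) ^ 2 * (1 - θ (t + 1) ^ 2) /
        ((r (t + 1) + 1) ^ 2 + 2 * (r (t + 1) + 1) * θ (t + 1) + 1))
    (hs : ∀ u, s u = r (u + 1) / r u)
    (hden : 2 - 2 * s t - (2 + r t) * r t * (s t) ^ 2 ≠ 0) :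
    s (t + 1) ^ 2 =
      (1 - (1 + r t) ^ 2 * (s t) ^ 2) /
        (2 - 2 * s t - (2 + r t) * r t * (s t) ^ 2) := by
  have ha : r t ≠ 0 := ne_of_gt hr0
  have hb : r (t + 1) ≠ 0 := ne_of_gt hr1
  rw [hθnext] at hdenθ hrec
  rw [hs t] at hden ⊢
  rw [hs (t + 1)]
  exact fw_key (r t) (r (t + 1)) (r (t + 2)) ha hb hdenθ hrec hden
end

section
/- Angle reconstruction: for any (r,s) with 0 < r ≤ 2, 0 ≤ s ≤ 1/(1+r) if r ≤ 1, and 0 ≤ s ≤ sqrt((2-r)/4) if 1 < r ≤ 2, the value θ = -s²(r+1) - sqrt((s²-1)(s²(1+r)²-1)) is a real number satisfying θ² + 2s²(1+r)θ + s²((1+r)²+1) - 1 = 0, together with -1 ≤ θ ≤ -r/2. -/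
/-- Angle reconstruction: for `(r,s)` in the admissible domain, the value
`θ = -s²(r+1) - √((s²-1)(s²(1+r)²-1))` solves the quadratic in `θ` and is a
valid feasible cosine, i.e. `-1 ≤ θ ≤ -r/2`. -/
theorem fw_angle_reconstruction
    (r s : ℝ) (hr0 : 0 < r) (hr2 : r ≤ 2) (hs0 : 0 ≤ s)
    (hs1 : r ≤ 1 → s ≤ 1 / (1 + r))
    (hs2 : 1 < r → s ≤ Real.sqrt ((2 - r) / 4))
    (θ : ℝ)
    (hθ : θ = -s ^ 2 * (r + 1) - Real.sqrt ((s ^ 2 - 1) * (s ^ 2 * (1 + r) ^ 2 - 1))) :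
    θ ^ 2 + 2 * s ^ 2 * (1 + r) * θ + s ^ 2 * ((1 + r) ^ 2 + 1) - 1 = 0 ∧
      -1 ≤ θ ∧ θ ≤ -r / 2 := by
  have h1r : (0:ℝ) < 1 + r := by linarith
  -- key bound: s^2 (1+r)^2 ≤ 1
  have hss : s ^ 2 * (1 + r) ^ 2 ≤ 1 := by
    rcases le_or_gt r 1 with h | h
    · have h1 := hs1 h
      have h2 : s * (1 + r) ≤ 1 := by
        have := mul_le_mul_of_nonneg_right h1 (le_of_lt h1r)
        rwa [one_div_mul_cancel (ne_of_gt h1r)] at this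
      nlinarith [mul_nonneg hs0 (le_of_lt h1r)]
    · have h1 := hs2 h
      have h24 : (0:ℝ) ≤ (2 - r) / 4 := by linarith
      have h2 : s ^ 2 ≤ (2 - r) / 4 := by
        nlinarith [Real.sq_sqrt h24, Real.sqrt_nonneg ((2 - r) / 4)]
      nlinarith [sq_nonneg (r - 1), sq_nonneg (1 + r)]
  have hs2sq : s ^ 2 ≤ 1 := by nlinarith [sq_nonneg s, sq_nonneg (1 + r)]
  have hD : 0 ≤ (s ^ 2 - 1) * (s ^ 2 * (1 + r) ^ 2 - 1) := by
    have : s ^ 2 - 1 ≤ 0 := by linarith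
    nlinarith
  set t := Real.sqrt ((s ^ 2 - 1) * (s ^ 2 * (1 + r) ^ 2 - 1)) with ht
  have htnn : 0 ≤ t := Real.sqrt_nonneg _
  have htsq : t ^ 2 = (s ^ 2 - 1) * (s ^ 2 * (1 + r) ^ 2 - 1) := Real.sq_sqrt hD
  have ha1 : s ^ 2 * (1 + r) ≤ 1 := by nlinarith
  refine ⟨?_, ?_, ?_⟩
  · rw [hθ]; linear_combination htsq
  · rw [hθ]
    have h1 : t ≤ 1 - s ^ 2 * (r + 1) := by
      nlinarith [sq_nonneg (r * s)]
    linarith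
  · rw [hθ]
    rcases le_or_gt (r / 2) (s ^ 2 * (r + 1)) with h | h
    · linarith
    · have hs24 : s ^ 2 ≤ (2 - r) / 4 := by
        rcases le_or_gt r 1 with h' | h'
        · nlinarith
        · have h1 := hs2 h'
          have h24 : (0:ℝ) ≤ (2 - r) / 4 := by linarith
          nlinarith [Real.sq_sqrt h24, Real.sqrt_nonneg ((2 - r) / 4)]
      have h2 : r / 2 - s ^ 2 * (r + 1) ≤ t := by
        nlinarith
      linarith
end

section
/- Jump characterization: let r > 0, 0 ≤ s < 1, with s₊² = (1-(1+r)²s²)/(2-2s-(2+r)rs²) and positive denominator. If s₊ < 1/2 then s > 1/(1+r)². In particular, if additionally r < √2 - 1, then s > s₊. -/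
/-- Jump characterization: if the next contraction factor satisfies `s₊ < 1/2`,
then `s > 1/(1+r)²`; if moreover `r < √2 - 1`, then `s > s₊`. -/
theorem fw_jump_characterization
    (r s splus : ℝ) (hr : 0 < r) (hs0 : 0 ≤ s) (hs1 : s < 1)
    (hsplus0 : 0 ≤ splus)
    (hden : 0 < 2 - 2 * s - (2 + r) * r * s ^ 2)
    (hdyn : splus ^ 2 =
      (1 - (1 + r) ^ 2 * s ^ 2) / (2 - 2 * s - (2 + r) * r * s ^ 2))
    (hjump : splus < 1 / 2) :
    s > 1 / (1 + r) ^ 2 ∧ (r < Real.sqrt 2 - 1 → s > splus) := by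
  have key : splus ^ 2 * (2 - 2 * s - (2 + r) * r * s ^ 2)
      = 1 - (1 + r) ^ 2 * s ^ 2 := by
    rw [hdyn, div_mul_cancel₀ _ (ne_of_gt hden)]
  have hsq : splus ^ 2 < 1 / 4 := by nlinarith
  have h1 : 1 - (1 + r) ^ 2 * s ^ 2 < (2 - 2 * s - (2 + r) * r * s ^ 2) / 4 := by
    nlinarith
  have hpos : (0:ℝ) < (1 + r) ^ 2 := by positivity
  have main : s > 1 / (1 + r) ^ 2 := by
    rw [gt_iff_lt, div_lt_iff₀ hpos]
    by_contra h
    push_neg at h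
    have h' : (1 + r) ^ 2 * s ≤ 1 := by nlinarith
    nlinarith [mul_nonneg (sub_nonneg.2 h') hs0, mul_nonneg hs0 hs0]
  refine ⟨main, fun hr2 => ?_⟩
  have hsqrt : Real.sqrt 2 ^ 2 = 2 := Real.sq_sqrt (by norm_num)
  have h2 : (1 + r) ^ 2 < 2 := by
    nlinarith [Real.sqrt_nonneg 2]
  have : (1:ℝ) / 2 < 1 / (1 + r) ^ 2 := by
    apply one_div_lt_one_div_of_lt hpos h2
  linarith
end

section
/- Monotonicity criterion for contraction factors: let (r,s) with 0 < s < 1, r > 0, and let s' = (1+r)s² - r + sqrt((1-s²)(1-(1+r)²s²)) be the backward contraction factor (assume 1-(1+r)²s² ≥ 0). Then s ≥ s' if and only if (1+s)·r·(2s+r) ≥ (1-s)(2s+1). Equivalently, (s - X)² - Y² = (1-s)·(-(1-s)(2s+1) + (1+s)r(2s+r)), where X = (1+r)s² - r and Y = sqrt((1-s²)(1-(1+r)²s²)). -/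
/-- Monotonicity criterion for contraction factors: with `X = (1+r)s² - r`,
`Y = √((1-s²)(1-(1+r)²s²))`, and `s' = X + Y`, one has `s ≥ s'` iff
`(1+s)r(2s+r) ≥ (1-s)(2s+1)`; moreover the exact factorization
`(s-X)² - Y² = (1-s)(-(1-s)(2s+1) + (1+s)r(2s+r))` holds. -/
theorem fw_monotonicity_criterion
    (r s : ℝ) (hr : 0 < r) (hs0 : 0 < s) (hs1 : s < 1)
    (hY : 0 ≤ 1 - (1 + r) ^ 2 * s ^ 2)
    (X Y s' : ℝ)
    (hX : X = (1 + r) * s ^ 2 - r)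
    (hYdef : Y = Real.sqrt ((1 - s ^ 2) * (1 - (1 + r) ^ 2 * s ^ 2)))
    (hs' : s' = X + Y) :
    (s ≥ s' ↔ (1 + s) * r * (2 * s + r) ≥ (1 - s) * (2 * s + 1)) ∧
    (s - X) ^ 2 - Y ^ 2
      = (1 - s) * (-(1 - s) * (2 * s + 1) + (1 + s) * r * (2 * s + r)) := by
  have hs2 : (0:ℝ) ≤ 1 - s ^ 2 := by nlinarith
  have hprod : (0:ℝ) ≤ (1 - s ^ 2) * (1 - (1 + r) ^ 2 * s ^ 2) := mul_nonneg hs2 hY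
  have hYnn : 0 ≤ Y := by rw [hYdef]; exact Real.sqrt_nonneg _
  have hYsq : Y ^ 2 = (1 - s ^ 2) * (1 - (1 + r) ^ 2 * s ^ 2) := by
    rw [hYdef, Real.sq_sqrt hprod]
  have key : (s - X) ^ 2 - Y ^ 2
      = (1 - s) * (-(1 - s) * (2 * s + 1) + (1 + s) * r * (2 * s + r)) := by
    rw [hX, hYsq]; ring
  have hsX : 0 ≤ s - X := by rw [hX]; nlinarith
  refine ⟨⟨fun h => ?_, fun h => ?_⟩, key⟩
  · have h1 : Y ≤ s - X := by rw [hs'] at h; linarith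
    nlinarith [key]
  · have h2 : 0 ≤ (s - X) ^ 2 - Y ^ 2 := by rw [key]; nlinarith
    have h3 : Y ≤ s - X := by nlinarith
    rw [hs']; linarith
end

section
/- Lower bound for backward contraction: for all (r,s) with 0 < r ≤ 1/3 and 0 ≤ s ≤ 1/(1+r), setting X = (1+r)s² - r and Y = sqrt((1-s²)(1-(1+r)²s²)), the quantity Y is real and nonnegative, X + Y is monotone nonincreasing in s on [0, 1/(1+r)], and X + Y ≥ 5/12. -/
lemma fw_hasDeriv (r x : ℝ) (hg : (1 - x ^ 2) * (1 - (1 + r) ^ 2 * x ^ 2) ≠ 0) :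
    HasDerivAt (fun u : ℝ => ((1 + r) * u ^ 2 - r) +
        Real.sqrt ((1 - u ^ 2) * (1 - (1 + r) ^ 2 * u ^ 2)))
      ((1 + r) * (2 * x) +
        1 / (2 * Real.sqrt ((1 - x ^ 2) * (1 - (1 + r) ^ 2 * x ^ 2))) *
          (-(2 * x) * (1 - (1 + r) ^ 2 * x ^ 2) +
            (1 - x ^ 2) * (-((1 + r) ^ 2 * (2 * x))))) x := by
  have h1 : HasDerivAt (fun u : ℝ => 1 - u ^ 2) (-(2 * x)) x := by
    simpa using (hasDerivAt_pow 2 x).const_sub 1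
  have h2 : HasDerivAt (fun u : ℝ => 1 - (1 + r) ^ 2 * u ^ 2) (-((1 + r) ^ 2 * (2 * x))) x := by
    simpa using ((hasDerivAt_pow 2 x).const_mul ((1 + r) ^ 2)).const_sub 1
  have hgd := h1.mul h2
  have hsq := (Real.hasDerivAt_sqrt hg).comp x hgd
  have hpoly : HasDerivAt (fun u : ℝ => (1 + r) * u ^ 2 - r) ((1 + r) * (2 * x)) x := by
    simpa using ((hasDerivAt_pow 2 x).const_mul (1 + r)).sub_const r
  exact hpoly.add hsq

lemma fw_anti_aux (r : ℝ) (hr0 : 0 < r) :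
    AntitoneOn (fun u : ℝ => ((1 + r) * u ^ 2 - r) +
        Real.sqrt ((1 - u ^ 2) * (1 - (1 + r) ^ 2 * u ^ 2)))
      (Set.Icc 0 (1 / (1 + r))) := by
  have ha0 : (0:ℝ) < 1 + r := by linarith
  have key : ∀ x ∈ Set.Ioo (0:ℝ) (1 / (1 + r)),
      (1 - x ^ 2) * (1 - (1 + r) ^ 2 * x ^ 2) ≠ 0 := by
    intro x ⟨hx0, hx1⟩
    have hxa : (1 + r) * x < 1 := by
      rw [lt_div_iff₀ ha0] at hx1; linarith [hx1]
    have hx1' : x < 1 := by nlinarith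
    have h1 : 0 < 1 - x ^ 2 := by nlinarith
    have h2 : 0 < 1 - (1 + r) ^ 2 * x ^ 2 := by nlinarith [mul_pos ha0 hx0]
    exact ne_of_gt (mul_pos h1 h2)
  apply antitoneOn_of_deriv_nonpos (convex_Icc _ _)
  · fun_prop
  · rw [interior_Icc]
    intro x hx
    exact (fw_hasDeriv r x (key x hx)).differentiableAt.differentiableWithinAt
  · rw [interior_Icc]
    intro x hx
    obtain ⟨hx0, hx1⟩ := hx
    rw [(fw_hasDeriv r x (key x ⟨hx0, hx1⟩)).deriv]
    set gx := (1 - x ^ 2) * (1 - (1 + r) ^ 2 * x ^ 2) with hgx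
    have hxa : (1 + r) * x < 1 := by
      rw [lt_div_iff₀ ha0] at hx1; linarith [hx1]
    have hx1' : x < 1 := by nlinarith
    have hgpos : 0 < gx := by
      have h1 : 0 < 1 - x ^ 2 := by nlinarith
      have h2 : 0 < 1 - (1 + r) ^ 2 * x ^ 2 := by nlinarith [mul_pos ha0 hx0]
      exact mul_pos h1 h2
    set S := Real.sqrt gx with hSdef
    have hS : 0 < S := Real.sqrt_pos.mpr hgpos
    have hS2 : S ^ 2 = gx := Real.sq_sqrt hgpos.le
    -- key inequality: 2(1+r) S ≤ 1 + (1+r)^2 - 2(1+r)^2 x^2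
    have hT0 : 0 ≤ 1 + (1 + r) ^ 2 - 2 * (1 + r) ^ 2 * x ^ 2 := by nlinarith [mul_pos ha0 hx0, sq_nonneg r]
    have hle : gx ≤ ((1 + (1 + r) ^ 2 - 2 * (1 + r) ^ 2 * x ^ 2) / (2 * (1 + r))) ^ 2 := by
      rw [div_pow, le_div_iff₀ (by positivity)]
      nlinarith [sq_nonneg ((1 + r) ^ 2 - 1)]
    have hS_le : 2 * (1 + r) * S ≤ 1 + (1 + r) ^ 2 - 2 * (1 + r) ^ 2 * x ^ 2 := by
      have h1 : S ≤ (1 + (1 + r) ^ 2 - 2 * (1 + r) ^ 2 * x ^ 2) / (2 * (1 + r)) := by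
        calc S ≤ Real.sqrt (((1 + (1 + r) ^ 2 - 2 * (1 + r) ^ 2 * x ^ 2) / (2 * (1 + r))) ^ 2) :=
              Real.sqrt_le_sqrt hle
          _ = _ := Real.sqrt_sq (by positivity)
      calc 2 * (1 + r) * S ≤ 2 * (1 + r) * ((1 + (1 + r) ^ 2 - 2 * (1 + r) ^ 2 * x ^ 2) / (2 * (1 + r))) := by
            apply mul_le_mul_of_nonneg_left h1 (by positivity)
        _ = _ := by field_simp
    have hnum : (1 + r) * (2 * x) * (2 * S) +
        (-(2 * x) * (1 - (1 + r) ^ 2 * x ^ 2) + (1 - x ^ 2) * (-((1 + r) ^ 2 * (2 * x)))) ≤ 0 := by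
      nlinarith [mul_le_mul_of_nonneg_left hS_le (by linarith : (0:ℝ) ≤ 2 * x)]
    have heq : (1 + r) * (2 * x) + 1 / (2 * S) *
        (-(2 * x) * (1 - (1 + r) ^ 2 * x ^ 2) + (1 - x ^ 2) * (-((1 + r) ^ 2 * (2 * x)))) =
        ((1 + r) * (2 * x) * (2 * S) +
          (-(2 * x) * (1 - (1 + r) ^ 2 * x ^ 2) + (1 - x ^ 2) * (-((1 + r) ^ 2 * (2 * x))))) / (2 * S) := by
      field_simp
    rw [heq]
    exact div_nonpos_of_nonpos_of_nonneg hnum (by positivity)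

/-- Lower bound for the backward contraction: on the domain
`0 < r ≤ 1/3`, `0 ≤ s ≤ 1/(1+r)`, the quantity `Y` is real (the radicand is
nonnegative) and nonnegative, `s ↦ X + Y` is antitone on `[0, 1/(1+r)]`, and
`X + Y ≥ 5/12`. -/
theorem fw_backward_contraction_lower_bound
    (r s : ℝ) (hr0 : 0 < r) (hr : r ≤ 1 / 3)
    (hs0 : 0 ≤ s) (hs : s ≤ 1 / (1 + r)) :
    0 ≤ (1 - s ^ 2) * (1 - (1 + r) ^ 2 * s ^ 2) ∧
    0 ≤ Real.sqrt ((1 - s ^ 2) * (1 - (1 + r) ^ 2 * s ^ 2)) ∧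
    AntitoneOn (fun u : ℝ => ((1 + r) * u ^ 2 - r) +
        Real.sqrt ((1 - u ^ 2) * (1 - (1 + r) ^ 2 * u ^ 2)))
      (Set.Icc 0 (1 / (1 + r))) ∧
    5 / 12 ≤ ((1 + r) * s ^ 2 - r) +
        Real.sqrt ((1 - s ^ 2) * (1 - (1 + r) ^ 2 * s ^ 2)) := by
  have ha0 : (0:ℝ) < 1 + r := by linarith
  have hsa : (1 + r) * s ≤ 1 := by
    rw [le_div_iff₀ ha0] at hs; linarith [hs]
  have hs1 : s ≤ 1 := by nlinarith
  have hrad : 0 ≤ (1 - s ^ 2) * (1 - (1 + r) ^ 2 * s ^ 2) := by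
    have h1 : 0 ≤ 1 - s ^ 2 := by nlinarith
    have h2 : 0 ≤ 1 - (1 + r) ^ 2 * s ^ 2 := by nlinarith [mul_nonneg ha0.le hs0]
    exact mul_nonneg h1 h2
  have hanti := fw_anti_aux r hr0
  refine ⟨hrad, Real.sqrt_nonneg _, hanti, ?_⟩
  have hmem : s ∈ Set.Icc (0:ℝ) (1 / (1 + r)) := ⟨hs0, hs⟩
  have hmem' : (1 / (1 + r)) ∈ Set.Icc (0:ℝ) (1 / (1 + r)) := ⟨by positivity, le_refl _⟩
  have hle := hanti hmem hmem' hs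
  simp only at hle
  have hend : ((1 + r) * (1 / (1 + r)) ^ 2 - r) +
      Real.sqrt ((1 - (1 / (1 + r)) ^ 2) * (1 - (1 + r) ^ 2 * (1 / (1 + r)) ^ 2)) =
      1 / (1 + r) - r := by
    have h0 : (1 - (1 + r) ^ 2 * (1 / (1 + r)) ^ 2) = 0 := by field_simp; ring
    rw [h0, mul_zero, Real.sqrt_zero, add_zero]
    field_simp
  rw [hend] at hle
  have hfinal : 5 / 12 ≤ 1 / (1 + r) - r := by
    have h1 : (5 / 12 + r) * (1 + r) ≤ 1 := by
      nlinarith [mul_nonneg (by linarith : (0:ℝ) ≤ 1 - 3 * r) (by linarith : (0:ℝ) ≤ 4 * r + 7)]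
    have h2 : 5 / 12 + r ≤ 1 / (1 + r) := by rw [le_div_iff₀ ha0]; exact h1
    linarith
  linarith
end

section
/- Backward dynamics invert forward dynamics: for (r,s) with 0 < r ≤ 1/3 and 0 ≤ s ≤ 1/(1+r), define G(r,s) = (r/(X+Y), X+Y) with X = (1+r)s² - r and Y = sqrt((1-s²)(1-(1+r)²s²)). Then G(r,s) lies in M = {(r',s') : 0 < r' ≤ 1, 0 ≤ s' ≤ 1/(1+r')}, and F(G(r,s)) = (r,s) where F(r',s') = (r's', sqrt((1-(r'+1)²s'²)/(2-2s'-(2+r')r' s'²))). -/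
/-- The forward dynamics map. -/
noncomputable def fwF (r s : ℝ) : ℝ × ℝ :=
  (r * s, Real.sqrt ((1 - (r + 1) ^ 2 * s ^ 2) / (2 - 2 * s - (2 + r) * r * s ^ 2)))

/-- The backward dynamics map. -/
noncomputable def fwG (r s : ℝ) : ℝ × ℝ :=
  let X := (1 + r) * s ^ 2 - r
  let Y := Real.sqrt ((1 - s ^ 2) * (1 - (1 + r) ^ 2 * s ^ 2))
  (r / (X + Y), X + Y)

private lemma fwD_pos (r T : ℝ) (hr0 : 0 < r) (hT0 : 0 < T) (hTle : T ≤ 1 - r) :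
    (0:ℝ) < 2 - 2 * T - (2 + r / T) * (r / T) * T ^ 2 := by
  have h : (2 + r / T) * (r / T) * T ^ 2 = 2 * T * r + r ^ 2 := by
    field_simp
  rw [h]
  nlinarith [mul_nonneg (by linarith : (0:ℝ) ≤ 1 - r - T) (by linarith : (0:ℝ) ≤ 1 + r)]

private lemma fwN_eq (r s T Y : ℝ) (hT0 : 0 < T)
    (hY2 : Y ^ 2 = (1 - s ^ 2) * (1 - (1 + r) ^ 2 * s ^ 2))
    (hTdef : T = (1 + r) * s ^ 2 - r + Y) :
    1 - (r / T + 1) ^ 2 * T ^ 2 = s ^ 2 * (2 - 2 * T - (2 + r / T) * (r / T) * T ^ 2) := by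
  have hTne : T ≠ 0 := ne_of_gt hT0
  have h1 : (r / T + 1) ^ 2 * T ^ 2 = (r + T) ^ 2 := by field_simp
  have h2 : (2 + r / T) * (r / T) * T ^ 2 = 2 * T * r + r ^ 2 := by field_simp
  rw [h1, h2, hTdef]
  linear_combination (-1 : ℝ) * hY2

set_option maxHeartbeats 2000000 in
/-- Backward dynamics invert forward dynamics: for `(r,s) ∈ M̃`, the point
`G(r,s)` lies in `M = {(r',s') : 0 < r' ≤ 1, 0 ≤ s' ≤ 1/(1+r')}` and
`F(G(r,s)) = (r,s)`. -/
theorem fw_backward_inverts_forward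
    (r s : ℝ) (hr0 : 0 < r) (hr : r ≤ 1 / 3)
    (hs0 : 0 ≤ s) (hs : s ≤ 1 / (1 + r)) :
    (0 < (fwG r s).1 ∧ (fwG r s).1 ≤ 1 ∧ 0 ≤ (fwG r s).2 ∧
      (fwG r s).2 ≤ 1 / (1 + (fwG r s).1)) ∧
    fwF (fwG r s).1 (fwG r s).2 = (r, s) := by
  have h1r : (0:ℝ) < 1 + r := by linarith
  have hs1 : (1 + r) * s ≤ 1 := by
    rw [le_div_iff₀ h1r] at hs; linarith
  have hsle1 : s ≤ 1 := by nlinarith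
  set P : ℝ := (1 - s ^ 2) * (1 - (1 + r) ^ 2 * s ^ 2) with hPdef
  have hP1 : 0 ≤ 1 - s ^ 2 := by nlinarith
  have hP2 : 0 ≤ 1 - (1 + r) ^ 2 * s ^ 2 := by nlinarith [mul_nonneg h1r.le hs0]
  have hP : 0 ≤ P := mul_nonneg hP1 hP2
  set Y : ℝ := Real.sqrt P with hYdef
  have hY0 : 0 ≤ Y := Real.sqrt_nonneg P
  have hY2 : Y ^ 2 = P := Real.sq_sqrt hP
  -- upper bound on Y
  have hus : (1 + r) * s ^ 2 ≤ 1 := by nlinarith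
  have hYle : Y ≤ 1 - (1 + r) * s ^ 2 := by
    have h : P ≤ (1 - (1 + r) * s ^ 2) ^ 2 := by nlinarith [sq_nonneg (r * s)]
    calc Y ≤ Real.sqrt ((1 - (1 + r) * s ^ 2) ^ 2) := Real.sqrt_le_sqrt h
      _ = 1 - (1 + r) * s ^ 2 := Real.sqrt_sq (by linarith)
  -- lower bound on Y
  have hYge : 2 * r - (1 + r) * s ^ 2 ≤ Y := by
    rcases le_or_gt (2 * r - (1 + r) * s ^ 2) 0 with h | h
    · linarith
    · have hsq : (2 * r - (1 + r) * s ^ 2) ^ 2 ≤ P := by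
        nlinarith [sq_nonneg s, sq_nonneg (s * (1 - 3 * r)), mul_nonneg (mul_nonneg hr0.le hr0.le) (sq_nonneg s), mul_nonneg (sq_nonneg s) (by linarith : (0:ℝ) ≤ 1/3 - r)]
      calc 2 * r - (1 + r) * s ^ 2 = Real.sqrt ((2 * r - (1 + r) * s ^ 2) ^ 2) :=
            (Real.sqrt_sq h.le).symm
        _ ≤ Y := Real.sqrt_le_sqrt hsq
  set T : ℝ := (1 + r) * s ^ 2 - r + Y with hTdef
  have hTge : r ≤ T := by simp only [hTdef]; linarith
  have hTle : T ≤ 1 - r := by simp only [hTdef]; linarith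
  have hT0 : 0 < T := lt_of_lt_of_le hr0 hTge
  have hTne : T ≠ 0 := ne_of_gt hT0
  have hG : fwG r s = (r / T, T) := by
    simp only [fwG, hTdef, hYdef, hPdef]
  rw [hG]
  clear_value T Y P
  clear hG
  dsimp only
  have hD : (0:ℝ) < 2 - 2 * T - (2 + r / T) * (r / T) * T ^ 2 :=
    fwD_pos r T hr0 hT0 hTle
  have hN : 1 - (r / T + 1) ^ 2 * T ^ 2 = s ^ 2 * (2 - 2 * T - (2 + r / T) * (r / T) * T ^ 2) :=
    fwN_eq r s T Y hT0 (hY2.trans hPdef) hTdef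
  constructor
  · refine ⟨div_pos hr0 hT0, (div_le_one hT0).2 hTge, hT0.le, ?_⟩
    have he : 1 + r / T = (T + r) / T := by field_simp
    rw [he, one_div_div, le_div_iff₀ (by linarith : (0:ℝ) < T + r)]
    exact mul_le_of_le_one_right hT0.le (by linarith)
  · have hfst : r / T * T = r := by field_simp
    have hsnd : Real.sqrt ((1 - (r / T + 1) ^ 2 * T ^ 2) / (2 - 2 * T - (2 + r / T) * (r / T) * T ^ 2)) = s := by
      rw [hN, mul_div_assoc, div_self (ne_of_gt hD), mul_one, Real.sqrt_sq hs0]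
    simp only [fwF]
    exact Prod.ext hfst hsnd
end

section
/- Second-order expansion bounds for the backward step: for r ∈ [0, 1/10] and s = 1 - (4/3)r + cr² with c ∈ [1, 5/2], Y = sqrt((1-s²)(1-(1+r)²s²)) is real, and X + Y (with X = (1+r)s² - r) satisfies 1 - (4/3)r + (11/9 - c/2)r² - 5r³ ≤ X + Y ≤ 1 - (4/3)r + (11/9 - c/2)r² + 2r³. -/
set_option maxHeartbeats 4000000 in
/-- Second-order expansion bounds for the backward step: for `r ∈ [0, 1/10]`
and `s = 1 - (4/3)r + cr²` with `c ∈ [1, 5/2]`, the radicand of `Y` is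
nonnegative and `X + Y` is bounded between
`1 - (4/3)r + (11/9 - c/2)r² - 5r³` and `1 - (4/3)r + (11/9 - c/2)r² + 2r³`. -/
theorem fw_backward_second_order_bounds
    (r c s : ℝ) (hr0 : 0 ≤ r) (hr : r ≤ 1 / 10)
    (hc1 : 1 ≤ c) (hc2 : c ≤ 5 / 2)
    (hs : s = 1 - 4 / 3 * r + c * r ^ 2)
    (X Y : ℝ)
    (hX : X = (1 + r) * s ^ 2 - r)
    (hY : Y = Real.sqrt ((1 - s ^ 2) * (1 - (1 + r) ^ 2 * s ^ 2))) :
    0 ≤ (1 - s ^ 2) * (1 - (1 + r) ^ 2 * s ^ 2) ∧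
    1 - 4 / 3 * r + (11 / 9 - c / 2) * r ^ 2 - 5 * r ^ 3 ≤ X + Y ∧
    X + Y ≤ 1 - 4 / 3 * r + (11 / 9 - c / 2) * r ^ 2 + 2 * r ^ 3 := by
  subst hs hX hY
  have hrc1 : 0 ≤ 1/10 - r := by linarith
  have hc1' : 0 ≤ c - 1 := by linarith
  have hc2' : 0 ≤ 5/2 - c := by linarith
  have hc0 : 0 ≤ c := by linarith
  have hcr0 : 0 ≤ c * r := mul_nonneg hc0 hr0
  have hr2 : r ^ 2 ≤ 1/100 := by nlinarith
  have hr4 : r ^ 4 ≤ 1/10000 := by nlinarith [sq_nonneg (r^2), pow_nonneg hr0 2]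
  have hc2sq : c ^ 2 ≤ 25/4 := by nlinarith
  have hs0 : 0 ≤ 1 - 4 / 3 * r + c * r ^ 2 := by nlinarith [mul_nonneg hcr0 hr0]
  have hs1 : 1 - 4 / 3 * r + c * r ^ 2 ≤ 1 := by
    nlinarith [mul_nonneg hr0 (by nlinarith : (0:ℝ) ≤ 4/3 - c * r)]
  have hA : 0 ≤ 1 - (1 - 4 / 3 * r + c * r ^ 2) ^ 2 := by nlinarith
  have hrs1 : (1 + r) * (1 - 4 / 3 * r + c * r ^ 2) ≤ 1 := by
    nlinarith [mul_nonneg hr0 (by nlinarith [mul_nonneg hcr0 hr0] :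
      (0:ℝ) ≤ 1/3 - (c - 4/3) * r - c * r ^ 2)]
  have hrs0 : 0 ≤ (1 + r) * (1 - 4 / 3 * r + c * r ^ 2) :=
    mul_nonneg (by linarith) hs0
  have hB : 0 ≤ 1 - (1 + r) ^ 2 * (1 - 4 / 3 * r + c * r ^ 2) ^ 2 := by nlinarith
  have hP0 : 0 ≤ (1 - (1 - 4 / 3 * r + c * r ^ 2) ^ 2) *
      (1 - (1 + r) ^ 2 * (1 - 4 / 3 * r + c * r ^ 2) ^ 2) := mul_nonneg hA hB
  refine ⟨hP0, ?_, ?_⟩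
  · -- lower bound
    have hLq : 0 ≤ 4/3 + (19/9 - 5/2 * c) * r + (-61/9 + 2/3 * c) * r ^ 2
        + (8/3 * c - c ^ 2) * r ^ 3 - c ^ 2 * r ^ 4 := by
      have h1 : 0 ≤ (5/2 - c) * r := mul_nonneg hc2' hr0
      have h2 : 0 ≤ c * r ^ 2 := mul_nonneg hc0 (sq_nonneg r)
      have h3 : 0 ≤ (8/3 * c - c ^ 2) * r ^ 3 :=
        mul_nonneg (by nlinarith) (pow_nonneg hr0 3)
      have h4 : 0 ≤ (25/4 - c ^ 2) * r ^ 4 :=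
        mul_nonneg (by linarith) (pow_nonneg hr0 4)
      nlinarith [sq_nonneg r]
    have hL0 : 0 ≤ 1 - 4 / 3 * r + (11 / 9 - c / 2) * r ^ 2 - 5 * r ^ 3 -
        ((1 + r) * (1 - 4 / 3 * r + c * r ^ 2) ^ 2 - r) := by
      have key : 1 - 4 / 3 * r + (11 / 9 - c / 2) * r ^ 2 - 5 * r ^ 3 -
          ((1 + r) * (1 - 4 / 3 * r + c * r ^ 2) ^ 2 - r)
          = r * (4/3 + (19/9 - 5/2 * c) * r + (-61/9 + 2/3 * c) * r ^ 2
            + (8/3 * c - c ^ 2) * r ^ 3 - c ^ 2 * r ^ 4) := by ring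
      rw [key]; exact mul_nonneg hr0 hLq
    have hQ : 0 ≤ 181/27 + 49/9 * c - 9/4 * c ^ 2 + (2062/81 - 647/27 * c) * r
        + (-385/9 + 4/27 * c + 31/9 * c ^ 2 - c ^ 3) * r ^ 2
        + (80/3 * c - 68/9 * c ^ 2 - c ^ 3) * r ^ 3 - 10 * c ^ 2 * r ^ 4 := by
      have b0 : (6:ℝ) ≤ 181/27 + 49/9 * c - 9/4 * c ^ 2 := by
        nlinarith [mul_nonneg hc1' hc2']
      have b1 : 0 ≤ (2062/81 - 647/27 * c + 35) * r :=
        mul_nonneg (by linarith) hr0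
      have b2 : 0 ≤ (-385/9 + 4/27 * c + 31/9 * c ^ 2 - c ^ 3 + 43) * r ^ 2 := by
        apply mul_nonneg _ (sq_nonneg r)
        nlinarith [mul_nonneg (mul_nonneg hc1' hc1') hc2', mul_nonneg hc1' hc2']
      have b3 : 0 ≤ (80/3 * c - 68/9 * c ^ 2 - c ^ 3) * r ^ 3 := by
        apply mul_nonneg _ (pow_nonneg hr0 3)
        nlinarith [mul_nonneg (mul_nonneg hc0 hc1') hc2', mul_nonneg hc0 hc2']
      have b4 : 0 ≤ (25/4 - c ^ 2) * r ^ 4 :=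
        mul_nonneg (by linarith) (pow_nonneg hr0 4)
      nlinarith [sq_nonneg r]
    have hsq : (1 - 4 / 3 * r + (11 / 9 - c / 2) * r ^ 2 - 5 * r ^ 3 -
          ((1 + r) * (1 - 4 / 3 * r + c * r ^ 2) ^ 2 - r)) ^ 2 ≤
        (1 - (1 - 4 / 3 * r + c * r ^ 2) ^ 2) *
          (1 - (1 + r) ^ 2 * (1 - 4 / 3 * r + c * r ^ 2) ^ 2) := by
      have key : (1 - (1 - 4 / 3 * r + c * r ^ 2) ^ 2) *
            (1 - (1 + r) ^ 2 * (1 - 4 / 3 * r + c * r ^ 2) ^ 2)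
          - (1 - 4 / 3 * r + (11 / 9 - c / 2) * r ^ 2 - 5 * r ^ 3 -
            ((1 + r) * (1 - 4 / 3 * r + c * r ^ 2) ^ 2 - r)) ^ 2
          = r ^ 4 * (181/27 + 49/9 * c - 9/4 * c ^ 2 + (2062/81 - 647/27 * c) * r
            + (-385/9 + 4/27 * c + 31/9 * c ^ 2 - c ^ 3) * r ^ 2
            + (80/3 * c - 68/9 * c ^ 2 - c ^ 3) * r ^ 3 - 10 * c ^ 2 * r ^ 4) := by
        ring
      have := mul_nonneg (pow_nonneg hr0 4) hQ
      linarith [key.ge, key.le]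
    have h := (Real.le_sqrt hL0 hP0).2 hsq
    linarith
  · -- upper bound
    have hUq : 0 ≤ 4/3 + (19/9 - 5/2 * c) * r + (2/9 + 2/3 * c) * r ^ 2
        + (8/3 * c - c ^ 2) * r ^ 3 - c ^ 2 * r ^ 4 := by
      have h1 : 0 ≤ (5/2 - c) * r := mul_nonneg hc2' hr0
      have h2 : 0 ≤ (2/9 + 2/3 * c) * r ^ 2 :=
        mul_nonneg (by linarith) (sq_nonneg r)
      have h3 : 0 ≤ (8/3 * c - c ^ 2) * r ^ 3 :=
        mul_nonneg (by nlinarith) (pow_nonneg hr0 3)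
      have h4 : 0 ≤ (25/4 - c ^ 2) * r ^ 4 :=
        mul_nonneg (by linarith) (pow_nonneg hr0 4)
      nlinarith [sq_nonneg r]
    have hU0 : 0 ≤ 1 - 4 / 3 * r + (11 / 9 - c / 2) * r ^ 2 + 2 * r ^ 3 -
        ((1 + r) * (1 - 4 / 3 * r + c * r ^ 2) ^ 2 - r) := by
      have key : 1 - 4 / 3 * r + (11 / 9 - c / 2) * r ^ 2 + 2 * r ^ 3 -
          ((1 + r) * (1 - 4 / 3 * r + c * r ^ 2) ^ 2 - r)
          = r * (4/3 + (19/9 - 5/2 * c) * r + (2/9 + 2/3 * c) * r ^ 2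
            + (8/3 * c - c ^ 2) * r ^ 3 - c ^ 2 * r ^ 4) := by ring
      rw [key]; exact mul_nonneg hr0 hUq
    have hQ : 0 ≤ 323/27 - 49/9 * c + 9/4 * c ^ 2 + (332/81 - 298/27 * c) * r
        + (-28/9 + 248/27 * c - 31/9 * c ^ 2 + c ^ 3) * r ^ 2
        + (32/3 * c - 58/9 * c ^ 2 + c ^ 3) * r ^ 3 - 4 * c ^ 2 * r ^ 4 := by
      have b0 : (8:ℝ) ≤ 323/27 - 49/9 * c + 9/4 * c ^ 2 := by
        nlinarith [sq_nonneg (c - 98/81)]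
      have b1 : 0 ≤ (332/81 - 298/27 * c + 24) * r :=
        mul_nonneg (by linarith) hr0
      have b2 : 0 ≤ (-28/9 + 248/27 * c - 31/9 * c ^ 2 + c ^ 3) * r ^ 2 := by
        apply mul_nonneg _ (sq_nonneg r)
        nlinarith [mul_nonneg (mul_nonneg hc1' hc1') hc1', mul_nonneg hc1' hc1']
      have b3 : 0 ≤ (32/3 * c - 58/9 * c ^ 2 + c ^ 3) * r ^ 3 := by
        apply mul_nonneg _ (pow_nonneg hr0 3)
        nlinarith [mul_nonneg hc0 (sq_nonneg (c - 29/9))]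
      have b4 : 0 ≤ (25/4 - c ^ 2) * r ^ 4 :=
        mul_nonneg (by linarith) (pow_nonneg hr0 4)
      nlinarith [sq_nonneg r]
    have hsq : (1 - (1 - 4 / 3 * r + c * r ^ 2) ^ 2) *
          (1 - (1 + r) ^ 2 * (1 - 4 / 3 * r + c * r ^ 2) ^ 2) ≤
        (1 - 4 / 3 * r + (11 / 9 - c / 2) * r ^ 2 + 2 * r ^ 3 -
          ((1 + r) * (1 - 4 / 3 * r + c * r ^ 2) ^ 2 - r)) ^ 2 := by
      have key : (1 - 4 / 3 * r + (11 / 9 - c / 2) * r ^ 2 + 2 * r ^ 3 -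
            ((1 + r) * (1 - 4 / 3 * r + c * r ^ 2) ^ 2 - r)) ^ 2
          - (1 - (1 - 4 / 3 * r + c * r ^ 2) ^ 2) *
            (1 - (1 + r) ^ 2 * (1 - 4 / 3 * r + c * r ^ 2) ^ 2)
          = r ^ 4 * (323/27 - 49/9 * c + 9/4 * c ^ 2 + (332/81 - 298/27 * c) * r
            + (-28/9 + 248/27 * c - 31/9 * c ^ 2 + c ^ 3) * r ^ 2
            + (32/3 * c - 58/9 * c ^ 2 + c ^ 3) * r ^ 3 - 4 * c ^ 2 * r ^ 4) := by
        ring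
      have := mul_nonneg (pow_nonneg hr0 4) hQ
      linarith [key.ge, key.le]
    have h := Real.sqrt_le_sqrt hsq
    rw [Real.sqrt_sq hU0] at h
    linarith
end

section
/- Invariance of the stable band under the backward step: for r ∈ (0, 1/10] and s = 1 - (4/3)r + cr² with c ∈ [1, 5/2], the backward step (r', s') = (r/(X+Y), X+Y) (with X = (1+r)s² - r, Y = sqrt((1-s²)(1-(1+r)²s²))) is well-defined, and there exists c' ∈ [1, 5/2] such that s' = 1 - (4/3)r' + c'(r')². -/
private lemma fw_aux_sq_le (a b : ℝ) (ha : 0 ≤ a) (hb : 0 ≤ b) (h : a ^ 2 ≤ b ^ 2) :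
    a ≤ b := by nlinarith

private lemma fw_aux_mono_lo (r S T : ℝ) (hrr : 0 ≤ r) (hT : 4/5 ≤ T) (hTS : T ≤ S)
    (hf : r ^ 2 ≤ T ^ 3 - T ^ 2 + 4/3*r*T) : r ^ 2 ≤ S ^ 3 - S ^ 2 + 4/3*r*S := by
  have hq : 0 ≤ S ^ 2 + S * T + T ^ 2 - S - T + 4/3*r := by
    nlinarith [sq_nonneg (S - T)]
  nlinarith [mul_nonneg (sub_nonneg.2 hTS) hq]

private lemma fw_aux_mono_hi (r S T : ℝ) (hrr : 0 ≤ r) (hS : 4/5 ≤ S) (hST : S ≤ T)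
    (hf : T ^ 3 - T ^ 2 + 4/3*r*T ≤ 5/2 * r ^ 2) : S ^ 3 - S ^ 2 + 4/3*r*S ≤ 5/2 * r ^ 2 := by
  have hq : 0 ≤ T ^ 2 + T * S + S ^ 2 - T - S + 4/3*r := by
    nlinarith [sq_nonneg (T - S)]
  nlinarith [mul_nonneg (sub_nonneg.2 hST) hq]

private lemma fw_aux_P1 (r c : ℝ) (h1c : (0:ℝ) ≤ c - 1) (h25c : (0:ℝ) ≤ 5/2 - c)
    (h10r : (0:ℝ) ≤ 1/10 - r) (hrr : (0:ℝ) ≤ r) :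
    (0:ℝ) ≤ ((-19/27) + (65/9)*c + (-9/4)*c^2) + ((1112/81) + (-4/27)*c + (-6)*c^2)*r + ((-1040/81) + (64/27)*c + (-49/3)*c^2 + (4)*c^3)*r^2 + ((-256/27)*c + (16/3)*c^2 + (8/3)*c^3)*r^3 + ((32/3)*c^2 + (-20/3)*c^3 + (1)*c^4)*r^4 + ((-16/3)*c^3 + (2)*c^4)*r^5 + ((1)*c^4)*r^6 := by
  linarith [(mul_nonneg (pow_nonneg h10r 3) (mul_nonneg h1c h25c)), h25c, (mul_nonneg h1c h25c), (mul_nonneg (pow_nonneg h10r 3) (mul_nonneg (pow_nonneg h1c 4) (pow_nonneg h25c 2))), (mul_nonneg (pow_nonneg h10r 4) (pow_nonneg h1c 6)), (mul_nonneg (pow_nonneg h10r 5) h25c), hrr, (mul_nonneg h10r h1c), (mul_nonneg h10r (pow_nonneg h1c 2)), (mul_nonneg (pow_nonneg h10r 4) (mul_nonneg h1c (pow_nonneg h25c 3))), (mul_nonneg h10r (mul_nonneg (pow_nonneg h1c 2) h25c)), (mul_nonneg h10r (mul_nonneg h1c (pow_nonneg h25c 3))), (mul_nonneg (pow_nonneg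 h10r 2) (pow_nonneg h25c 7)), (mul_nonneg hrr h10r), (mul_nonneg hrr (pow_nonneg h10r 2)), (mul_nonneg (pow_nonneg h10r 3) h25c), (mul_nonneg (pow_nonneg h10r 4) (mul_nonneg h1c (pow_nonneg h25c 2))), (mul_nonneg (pow_nonneg h10r 2) (mul_nonneg h1c (pow_nonneg h25c 3))), (mul_nonneg (pow_nonneg h10r 2) (pow_nonneg h1c 8)), (mul_nonneg (pow_nonneg h10r 5) (mul_nonneg (pow_nonneg h1c 2) h25c)), (mul_nonneg h1c (pow_nonneg h25c 2)), (mul_nonneg (pow_nonneg h10r 2) h1c), (mul_nonneg hrr h25c), (mul_nonneg hrr (pow_nonneg h10r 3)), (pow_nonneg h25c 4), (mul_nonneg (pow_nonneg h10r 2) (pow_nonneg h25c 3)), (mul_nonneg (pow_nonneg h10r 2) (mul_nonneg h1c (pow_nonneg h25c 7))), (mul_nonneg (pow_nonneg h10r 4) (pow_nonneg h25c 5)), (mul_nonneg (pow_nonneg h10r 4) h1c), (mul_nonneg (pow_nonneg h10r 3) (mul_nonneg (pow_nonneg h1c 4) h25c)), (mul_nonneg (pow_nonneg h10r 3) (mul_nonneg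 h1c (pow_nonneg h25c 5))), (mul_nonneg (pow_nonneg h10r 5) (mul_nonneg h1c (pow_nonneg h25c 3))), (mul_nonneg (pow_nonneg h10r 3) (pow_nonneg h25c 3)), (mul_nonneg (pow_nonneg h10r 2) (mul_nonneg (pow_nonneg h1c 2) (pow_nonneg h25c 3))), (mul_nonneg (pow_nonneg h10r 6) (mul_nonneg (pow_nonneg h1c 2) (pow_nonneg h25c 2))), (mul_nonneg (pow_nonneg h10r 4) (mul_nonneg h1c (pow_nonneg h25c 5))), (mul_nonneg (pow_nonneg h10r 6) h1c), (mul_nonneg (pow_nonneg h10r 2) (mul_nonneg h1c (pow_nonneg h25c 5))), (mul_nonneg hrr (pow_nonneg h10r 4)), (mul_nonneg (pow_nonneg h10r 5) (mul_nonneg h1c h25c)), (mul_nonneg (pow_nonneg h10r 6) (pow_nonneg h1c 2)), (mul_nonneg (pow_nonneg h10r 6) (pow_nonneg h1c 3)), (mul_nonneg (pow_nonneg h10r 6) (pow_nonneg h25c 4))]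

private lemma fw_aux_P2 (r c : ℝ) (h1c : (0:ℝ) ≤ c - 1) (h25c : (0:ℝ) ≤ 5/2 - c)
    (h10r : (0:ℝ) ≤ 1/10 - r) (hrr : (0:ℝ) ≤ r) :
    (0:ℝ) ≤ ((235/27) + (-65/9)*c + (9/4)*c^2) + ((-86/81) + (-401/27)*c + (6)*c^2)*r + ((-175/81) + (-64/27)*c + (49/3)*c^2 + (-4)*c^3)*r^2 + ((256/27)*c + (-16/3)*c^2 + (-8/3)*c^3)*r^3 + ((-32/3)*c^2 + (20/3)*c^3 + (-1)*c^4)*r^4 + ((16/3)*c^3 + (-2)*c^4)*r^5 + ((-1)*c^4)*r^6 := by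
  linarith [(mul_nonneg h10r (mul_nonneg h1c h25c)), (mul_nonneg (pow_nonneg h1c 6) h25c), h1c, (mul_nonneg (pow_nonneg h10r 2) h1c), (mul_nonneg (pow_nonneg h1c 6) (pow_nonneg h25c 2)), (mul_nonneg h1c (pow_nonneg h25c 4)), (mul_nonneg h1c (pow_nonneg h25c 7)), (pow_nonneg h1c 5), (pow_nonneg h25c 7), (mul_nonneg h10r (pow_nonneg h25c 4)), (mul_nonneg h1c (pow_nonneg h25c 5)), (mul_nonneg h10r h25c), (pow_nonneg h10r 2), (mul_nonneg (pow_nonneg h10r 3) (pow_nonneg h1c 2)), (mul_nonneg (pow_nonneg h10r 2) (mul_nonneg (pow_nonneg h1c 2) h25c)), (mul_nonneg h10r (mul_nonneg h1c (pow_nonneg h25c 2))), (pow_nonneg h1c 2), (mul_nonneg (pow_nonneg h10r 2) (mul_nonneg h1c h25c)), (mul_nonneg (pow_nonneg h10r 4) h1c), (mul_nonneg hrr (pow_nonneg h10r 2)), (mul_nonneg (pow_nonneg h10r 2) (mul_nonneg h1c (pow_nonneg h25c 3))), (mul_nonneg (pow_nonneg h10r 3) h1c), (mul_nonneg (pow_nonneg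 h10r 3) (pow_nonneg h25c 4)), (mul_nonneg (pow_nonneg h10r 4) (pow_nonneg h25c 3)), (mul_nonneg (pow_nonneg h10r 4) (mul_nonneg h1c (pow_nonneg h25c 3))), (mul_nonneg hrr (pow_nonneg h10r 3)), hrr, (mul_nonneg (pow_nonneg h10r 4) (mul_nonneg h1c h25c)), (mul_nonneg (pow_nonneg h10r 3) (mul_nonneg h1c (pow_nonneg h25c 2))), (mul_nonneg (pow_nonneg h10r 5) (mul_nonneg h1c (pow_nonneg h25c 2))), (mul_nonneg (pow_nonneg h10r 5) (mul_nonneg (pow_nonneg h1c 2) (pow_nonneg h25c 2))), (mul_nonneg (pow_nonneg h10r 5) h25c), (mul_nonneg (pow_nonneg h10r 5) (pow_nonneg h1c 3)), (mul_nonneg hrr (pow_nonneg h10r 4)), (mul_nonneg hrr (pow_nonneg h10r 5)), (mul_nonneg (pow_nonneg h10r 6) (mul_nonneg h1c (pow_nonneg h25c 3))), (mul_nonneg (pow_nonneg h10r 6) (pow_nonneg h25c 3)), (mul_nonneg (pow_nonneg h10r 6) h25c), (mul_nonneg (pow_nonneg h10r 6) (mul_nonneg h1c h25c))]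

private lemma fw_aux_FLO (r c : ℝ) (h1c : (0:ℝ) ≤ c - 1) (h25c : (0:ℝ) ≤ 5/2 - c)
    (h10r : (0:ℝ) ≤ 1/10 - r) (hrr : (0:ℝ) ≤ r) :
    (0:ℝ) ≤ ((2) + (-1/2)*c) + ((-304/27) + (2)*c)*r + ((2066/81) + (-46/9)*c + (1/2)*c^2)*r^2 + ((-3796/81) + (116/9)*c + (-1)*c^2)*r^3 + ((53171/729) + (-985/54)*c + (11/12)*c^2 + (-1/8)*c^3)*r^4 + ((-2212/27) + (44/3)*c + (-3)*c^2)*r^5 + ((176/3) + (-24)*c)*r^6 + ((-64))*r^7 := by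
  linarith [h10r, h25c, (mul_nonneg (pow_nonneg h10r 4) (pow_nonneg h25c 3)), (mul_nonneg h10r (mul_nonneg h1c h25c)), (mul_nonneg h10r h25c), h1c, (pow_nonneg h25c 2), (pow_nonneg h25c 3), (pow_nonneg h10r 2), (mul_nonneg (pow_nonneg h10r 3) h25c), (mul_nonneg (pow_nonneg h10r 2) (pow_nonneg h25c 2)), (mul_nonneg h10r (mul_nonneg h1c (pow_nonneg h25c 2))), (pow_nonneg h10r 5), (mul_nonneg (pow_nonneg h10r 3) (pow_nonneg h25c 2)), (mul_nonneg (pow_nonneg h10r 2) h25c), (mul_nonneg (pow_nonneg h10r 2) (pow_nonneg h25c 3)), (mul_nonneg (pow_nonneg h10r 4) h25c), (pow_nonneg h10r 3), (mul_nonneg (pow_nonneg h10r 3) (mul_nonneg h1c (pow_nonneg h25c 2))), (mul_nonneg (pow_nonneg h10r 4) (mul_nonneg h1c h25c)), (pow_nonneg h10r 7), (mul_nonneg (pow_nonneg h10r 5) (pow_nonneg h25c 2)), (mul_nonneg (pow_nonneg h10r 5) h1c), (mul_nonneg (pow_nonneg h10r 6) h25c), (mul_nonneg hrr (pow_nonneg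 h10r 3)), (mul_nonneg hrr (pow_nonneg h10r 5))]

private lemma fw_aux_FHI (r c : ℝ) (h1c : (0:ℝ) ≤ c - 1) (h25c : (0:ℝ) ≤ 5/2 - c)
    (h10r : (0:ℝ) ≤ 1/10 - r) (hrr : (0:ℝ) ≤ r) :
    (0:ℝ) ≤ ((-1/2) + (1/2)*c) + ((193/27) + (-2)*c)*r + ((-734/81) + (46/9)*c + (-1/2)*c^2)*r^2 + ((392/81) + (-14/3)*c + (1)*c^2)*r^3 + ((-557/729) + (97/54)*c + (-11/12)*c^2 + (1/8)*c^3)*r^4 + ((-109/243) + (11/27)*c + (-1/12)*c^2)*r^5 + ((-11/243) + (1/54)*c)*r^6 + ((-1/729))*r^7 := by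
  linarith [h1c, (mul_nonneg h10r (pow_nonneg h1c 2)), (mul_nonneg (pow_nonneg h10r 4) (mul_nonneg h1c (pow_nonneg h25c 2))), (mul_nonneg (pow_nonneg h10r 5) (pow_nonneg h1c 2)), hrr, (mul_nonneg h10r h1c), (mul_nonneg (pow_nonneg h10r 3) (mul_nonneg (pow_nonneg h1c 2) h25c)), (mul_nonneg (pow_nonneg h10r 2) (mul_nonneg h1c (pow_nonneg h25c 2))), (mul_nonneg hrr h10r), (mul_nonneg (pow_nonneg h10r 2) h1c), (mul_nonneg (pow_nonneg h10r 2) (mul_nonneg h1c h25c)), (mul_nonneg h1c h25c), (mul_nonneg hrr (pow_nonneg h10r 2)), (mul_nonneg (pow_nonneg h10r 3) h1c), (mul_nonneg (pow_nonneg h10r 3) (mul_nonneg h1c h25c)), (mul_nonneg h1c (pow_nonneg h25c 2)), (mul_nonneg h10r (mul_nonneg (pow_nonneg h1c 2) h25c)), (mul_nonneg (pow_nonneg hrr 2) (pow_nonneg h10r 2)), (mul_nonneg (mul_nonneg hrr (pow_nonneg h10r 3)) h1c), (mul_nonneg (pow_nonneg hrr 2) (pow_nonneg h10r 3)), (mul_nonneg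 (mul_nonneg hrr (pow_nonneg h10r 4)) h1c), (mul_nonneg (pow_nonneg h10r 4) (mul_nonneg h1c h25c)), (mul_nonneg hrr (pow_nonneg h10r 5)), (mul_nonneg (pow_nonneg h10r 6) h1c), (mul_nonneg (pow_nonneg hrr 2) (pow_nonneg h10r 5))]


private lemma fw_aux_s_bounds (r c : ℝ) (h1c : (0:ℝ) ≤ c - 1) (h25c : (0:ℝ) ≤ 5/2 - c)
    (h10r : (0:ℝ) ≤ 1/10 - r) (hrr : (0:ℝ) ≤ r) :
    0 ≤ 1 - 4 / 3 * r + c * r ^ 2 ∧ 1 - 4 / 3 * r + c * r ^ 2 ≤ 1 ∧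
      (1 + r) * (1 - 4 / 3 * r + c * r ^ 2) ≤ 1 := by
  refine ⟨?_, ?_, ?_⟩
  · nlinarith [mul_nonneg (mul_nonneg hrr hrr) h1c]
  · nlinarith [mul_nonneg (mul_nonneg hrr hrr) h25c, mul_nonneg hrr h10r]
  · nlinarith [mul_nonneg (mul_nonneg hrr hrr) h25c, mul_nonneg hrr h10r, mul_nonneg (mul_nonneg hrr hrr) h10r, mul_nonneg (mul_nonneg (mul_nonneg hrr hrr) hrr) h25c, mul_nonneg (mul_nonneg hrr hrr) (mul_nonneg h25c h10r)]

private lemma fw_aux_LU0 (r c : ℝ) (h1c : (0:ℝ) ≤ c - 1) (h25c : (0:ℝ) ≤ 5/2 - c)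
    (h10r : (0:ℝ) ≤ 1/10 - r) (hrr : (0:ℝ) ≤ r) :
    0 ≤ 4/3*r + (19/9 - 5/2*c)*r^2 - 4*r^3 ∧ 0 ≤ 4/3*r + (19/9 - 5/2*c)*r^2 - 1*r^3 := by
  constructor
  · nlinarith [mul_nonneg (mul_nonneg hrr hrr) h25c, mul_nonneg hrr h10r, mul_nonneg (mul_nonneg hrr hrr) h10r]
  · nlinarith [mul_nonneg (mul_nonneg hrr hrr) h25c, mul_nonneg hrr h10r, mul_nonneg (mul_nonneg hrr hrr) h10r, mul_nonneg (mul_nonneg hrr hrr) hrr]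

private lemma fw_aux_Xbounds (r c : ℝ) (h1c : (0:ℝ) ≤ c - 1) (h25c : (0:ℝ) ≤ 5/2 - c)
    (h10r : (0:ℝ) ≤ 1/10 - r) (hrr : (0:ℝ) ≤ r) :
    1 - 8/3*r + (2*c - 8/9)*r^2 ≤ (1 + r) * (1 - 4 / 3 * r + c * r ^ 2) ^ 2 - r ∧
      (1 + r) * (1 - 4 / 3 * r + c * r ^ 2) ^ 2 - r ≤ 1 - 8/3*r + (2*c - 8/9)*r^2 + 10/9*r^3 := by
  constructor
  · nlinarith [mul_nonneg (mul_nonneg hrr hrr) hrr, mul_nonneg (mul_nonneg (mul_nonneg hrr hrr) hrr) h1c, mul_nonneg (mul_nonneg (mul_nonneg hrr hrr) hrr) h25c, mul_nonneg (mul_nonneg (mul_nonneg hrr hrr) hrr) h10r, mul_nonneg (mul_nonneg (mul_nonneg hrr hrr) (mul_nonneg hrr hrr)) (mul_nonneg h1c h1c), sq_nonneg (r*c), mul_nonneg (mul_nonneg (mul_nonneg hrr hrr) hrr) (mul_nonneg h1c h25c)]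
  · nlinarith [mul_nonneg (mul_nonneg hrr hrr) hrr, mul_nonneg (mul_nonneg (mul_nonneg hrr hrr) hrr) h1c, mul_nonneg (mul_nonneg (mul_nonneg hrr hrr) hrr) h25c, mul_nonneg (mul_nonneg (mul_nonneg hrr hrr) hrr) h10r, mul_nonneg (mul_nonneg (mul_nonneg hrr hrr) (mul_nonneg hrr hrr)) (mul_nonneg h1c h1c), sq_nonneg (r*c), mul_nonneg (mul_nonneg (mul_nonneg hrr hrr) hrr) (mul_nonneg h1c h25c), mul_nonneg (mul_nonneg (mul_nonneg hrr hrr) (mul_nonneg hrr hrr)) h1c, mul_nonneg (mul_nonneg (mul_nonneg hrr hrr) (mul_nonneg hrr hrr)) h25c]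

private lemma fw_aux_Slo45 (r c : ℝ) (h1c : (0:ℝ) ≤ c - 1) (h25c : (0:ℝ) ≤ 5/2 - c)
    (h10r : (0:ℝ) ≤ 1/10 - r) (hrr : (0:ℝ) ≤ r) :
    (4:ℝ)/5 ≤ 1 + (-4/3)*r + (11/9 - 1/2*c)*r^2 + (-4)*r^3 := by
  nlinarith [mul_nonneg (mul_nonneg hrr hrr) h25c, mul_nonneg (mul_nonneg hrr hrr) h10r, mul_nonneg hrr h10r]

set_option maxHeartbeats 4000000 in
/-- Invariance of the stable band under the backward step: for
`r ∈ (0, 1/10]` and `s = 1 - (4/3)r + cr²` with `c ∈ [1, 5/2]`, the backward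
step `(r', s') = (r/(X+Y), X+Y)` is well-defined (`X + Y > 0`) and there exists
`c' ∈ [1, 5/2]` with `s' = 1 - (4/3)r' + c'(r')²`. -/
theorem fw_stable_band_invariance
    (r c s : ℝ) (hr0 : 0 < r) (hr : r ≤ 1 / 10)
    (hc1 : 1 ≤ c) (hc2 : c ≤ 5 / 2)
    (hs : s = 1 - 4 / 3 * r + c * r ^ 2)
    (X Y r' s' : ℝ)
    (hX : X = (1 + r) * s ^ 2 - r)
    (hY : Y = Real.sqrt ((1 - s ^ 2) * (1 - (1 + r) ^ 2 * s ^ 2)))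
    (hr' : r' = r / (X + Y)) (hs' : s' = X + Y) :
    0 < X + Y ∧
    ∃ c' : ℝ, 1 ≤ c' ∧ c' ≤ 5 / 2 ∧ s' = 1 - 4 / 3 * r' + c' * r' ^ 2 := by
  have h1c : (0:ℝ) ≤ c - 1 := by linarith
  have h25c : (0:ℝ) ≤ 5/2 - c := by linarith
  have h10r : (0:ℝ) ≤ 1/10 - r := by linarith
  have hrr : (0:ℝ) ≤ r := hr0.le
  have hr2 : (0:ℝ) < r ^ 2 := by positivity
  have hr4 : (0:ℝ) ≤ r ^ 4 := by positivity
  -- basic bounds on s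
  obtain ⟨hs0, hs1, hps1⟩ := fw_aux_s_bounds r c h1c h25c h10r hrr
  rw [← hs] at hs0 hs1 hps1
  have hf1 : 0 ≤ 1 - s ^ 2 := by nlinarith [hs0, hs1]
  have hf2 : 0 ≤ 1 - (1 + r) ^ 2 * s ^ 2 := by
    have h2 : 0 ≤ (1 + r) * s := by nlinarith [hs0, hrr]
    nlinarith [hps1, h2]
  have hQnn : 0 ≤ (1 - s ^ 2) * (1 - (1 + r) ^ 2 * s ^ 2) := mul_nonneg hf1 hf2
  have hY0 : 0 ≤ Y := hY ▸ Real.sqrt_nonneg _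
  have hY2 : Y ^ 2 = (1 - s ^ 2) * (1 - (1 + r) ^ 2 * s ^ 2) := by
    rw [hY]; exact Real.sq_sqrt hQnn
  -- lower/upper bounds for Y
  obtain ⟨hL0, hU0⟩ := fw_aux_LU0 r c h1c h25c h10r hrr
  have hLY : 4/3*r + (19/9 - 5/2*c)*r^2 - 4*r^3 ≤ Y := by
    refine fw_aux_sq_le _ _ hL0 hY0 ?_
    have hid : (1 - s ^ 2) * (1 - (1 + r) ^ 2 * s ^ 2) - (4/3*r + (19/9 - 5/2*c)*r^2 - 4*r^3) ^ 2 = r^4 * (((-19/27) + (65/9)*c + (-9/4)*c^2) + ((1112/81) + (-4/27)*c + (-6)*c^2)*r + ((-1040/81) + (64/27)*c + (-49/3)*c^2 + (4)*c^3)*r^2 + ((-256/27)*c + (16/3)*c^2 + (8/3)*c^3)*r^3 + ((32/3)*c^2 + (-20/3)*c^3 + (1)*c^4)*r^4 + ((-16/3)*c^3 + (2)*c^4)*r^5 + ((1)*c^4)*r^6) := by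
      rw [hs]; ring
    linarith [mul_nonneg hr4 (fw_aux_P1 r c h1c h25c h10r hrr), hY2.ge, hid.le, hid.ge, hY2.le]
  have hYU : Y ≤ 4/3*r + (19/9 - 5/2*c)*r^2 - 1*r^3 := by
    refine fw_aux_sq_le _ _ hY0 hU0 ?_
    have hid : (4/3*r + (19/9 - 5/2*c)*r^2 - 1*r^3) ^ 2 - (1 - s ^ 2) * (1 - (1 + r) ^ 2 * s ^ 2) = r^4 * (((235/27) + (-65/9)*c + (9/4)*c^2) + ((-86/81) + (-401/27)*c + (6)*c^2)*r + ((-175/81) + (-64/27)*c + (49/3)*c^2 + (-4)*c^3)*r^2 + ((256/27)*c + (-16/3)*c^2 + (-8/3)*c^3)*r^3 + ((-32/3)*c^2 + (20/3)*c^3 + (-1)*c^4)*r^4 + ((16/3)*c^3 + (-2)*c^4)*r^5 + ((-1)*c^4)*r^6) := by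
      rw [hs]; ring
    linarith [mul_nonneg hr4 (fw_aux_P2 r c h1c h25c h10r hrr), hY2.ge, hY2.le, hid.le, hid.ge]
  -- bounds on X
  obtain ⟨hX1, hX2⟩ := fw_aux_Xbounds r c h1c h25c h10r hrr
  rw [← hs, ← hX] at hX1 hX2
  -- S bounds
  have hS1 : 1 + (-4/3)*r + (11/9 - 1/2*c)*r^2 + (-4)*r^3 ≤ X + Y := by linarith
  have hS2 : X + Y ≤ 1 + (-4/3)*r + (11/9 - 1/2*c)*r^2 + (1/9)*r^3 := by linarith
  have hSlo45 := fw_aux_Slo45 r c h1c h25c h10r hrr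
  have hSpos : 0 < X + Y := by linarith
  refine ⟨hSpos, ?_⟩
  -- endpoint polynomial inequalities
  have hfSlo : r ^ 2 ≤ (1 + (-4/3)*r + (11/9 - 1/2*c)*r^2 + (-4)*r^3) ^ 3 - (1 + (-4/3)*r + (11/9 - 1/2*c)*r^2 + (-4)*r^3) ^ 2 + 4/3*r*(1 + (-4/3)*r + (11/9 - 1/2*c)*r^2 + (-4)*r^3) := by
    have hid : (1 + (-4/3)*r + (11/9 - 1/2*c)*r^2 + (-4)*r^3) ^ 3 - (1 + (-4/3)*r + (11/9 - 1/2*c)*r^2 + (-4)*r^3) ^ 2 + 4/3*r*(1 + (-4/3)*r + (11/9 - 1/2*c)*r^2 + (-4)*r^3) - r ^ 2 = r^2 * (((2) + (-1/2)*c) + ((-304/27) + (2)*c)*r + ((2066/81) + (-46/9)*c + (1/2)*c^2)*r^2 + ((-3796/81) + (116/9)*c + (-1)*c^2)*r^3 + ((53171/729) + (-985/54)*c + (11/12)*c^2 + (-1/8)*c^3)*r^4 + ((-2212/27) + (44/3)*c + (-3)*c^2)*r^5 + ((176/3) + (-24)*c)*r^6 + ((-64))*r^7) := by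
      ring
    linarith [mul_nonneg hr2.le (fw_aux_FLO r c h1c h25c h10r hrr), hid.le, hid.ge]
  have hfShi : (1 + (-4/3)*r + (11/9 - 1/2*c)*r^2 + (1/9)*r^3) ^ 3 - (1 + (-4/3)*r + (11/9 - 1/2*c)*r^2 + (1/9)*r^3) ^ 2 + 4/3*r*(1 + (-4/3)*r + (11/9 - 1/2*c)*r^2 + (1/9)*r^3) ≤ 5/2 * r ^ 2 := by
    have hid : 5/2 * r ^ 2 - ((1 + (-4/3)*r + (11/9 - 1/2*c)*r^2 + (1/9)*r^3) ^ 3 - (1 + (-4/3)*r + (11/9 - 1/2*c)*r^2 + (1/9)*r^3) ^ 2 + 4/3*r*(1 + (-4/3)*r + (11/9 - 1/2*c)*r^2 + (1/9)*r^3)) = r^2 * (((-1/2) + (1/2)*c) + ((193/27) + (-2)*c)*r + ((-734/81) + (46/9)*c + (-1/2)*c^2)*r^2 + ((392/81) + (-14/3)*c + (1)*c^2)*r^3 + ((-557/729) + (97/54)*c + (-11/12)*c^2 + (1/8)*c^3)*r^4 + ((-109/243) + (11/27)*c + (-1/12)*c^2)*r^5 + ((-11/243) + (1/54)*c)*r^6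 + ((-1/729))*r^7) := by
      ring
    linarith [mul_nonneg hr2.le (fw_aux_FHI r c h1c h25c h10r hrr), hid.le, hid.ge]
  have hS45 : (4:ℝ)/5 ≤ X + Y := le_trans hSlo45 hS1
  have hlow : r ^ 2 ≤ (X+Y) ^ 3 - (X+Y) ^ 2 + 4/3*r*(X+Y) :=
    fw_aux_mono_lo r (X+Y) _ hrr hSlo45 hS1 hfSlo
  have hhigh : (X+Y) ^ 3 - (X+Y) ^ 2 + 4/3*r*(X+Y) ≤ 5/2 * r ^ 2 :=
    fw_aux_mono_hi r (X+Y) _ hrr hS45 hS2 hfShi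
  -- conclude
  refine ⟨((X+Y) ^ 3 - (X+Y) ^ 2 + 4/3*r*(X+Y)) / r ^ 2, ?_, ?_, ?_⟩
  · rw [le_div_iff₀ hr2]; linarith
  · rw [div_le_iff₀ hr2]; linarith
  · have hSne : X + Y ≠ 0 := ne_of_gt hSpos
    have hrne : r ≠ 0 := ne_of_gt hr0
    rw [hs', hr']
    field_simp
    ring
end
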